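/- On a finite weighted tree T with positive edge lengths λ, for Dirac measures δ_x and δ_y at vertices x and y, the Sobolev transport distance satisfies S_p(δ_x, δ_y) = (Σ_{e ∈ [x,y]} λ(e))^{1/p}, where [x,y] is the unique path between x and y in T. -/

import Mathlib

open scoped BigOperators Classical
open Filter

noncomputable section

variable {V : Type*}

/-- The unique path between two vertices of a tree, as a walk. -/
def treePath (G : SimpleGraph V) (hG : G.IsTree) (x y : V) : G.Walk x y :=
  (hG.existsUnique_path x y).exists.choose

/-- Dirac probability measure at `x`, as a function. -/
def dirac [DecidableEq V] (x : V) : V → ℝ := fun v => if v = x then 1 else 0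

/-- A probability measure on a finite vertex set, as a function. -/
def IsProb [Fintype V] (mu : V → ℝ) : Prop := (∀ v, 0 ≤ mu v) ∧ ∑ v, mu v = 1

/-- Cut mass `μ(γ_e)`: total μ-mass of vertices `v` such that the edge `e` lies on the
unique path from the root `z0` to `v`. -/
def cutMass [Fintype V] (G : SimpleGraph V) (hG : G.IsTree) (z0 : V)
    (mu : V → ℝ) (e : Sym2 V) : ℝ :=
  ∑ v : V, if e ∈ (treePath G hG z0 v).edges then mu v else 0

/-- Order-1 Sobolev transport distance on a rooted tree. -/
def S1 [Fintype V] (G : SimpleGraph V) (hG : G.IsTree) (z0 : V) (lam : Sym2 V → ℝ)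
    (mu nu : V → ℝ) : ℝ :=
  ∑ e ∈ G.edgeFinset, lam e * |cutMass G hG z0 mu e - cutMass G hG z0 nu e|

/-- Order-p Sobolev transport distance on a rooted tree. -/
def Sp [Fintype V] (G : SimpleGraph V) (hG : G.IsTree) (z0 : V) (lam : Sym2 V → ℝ)
    (p : ℝ) (mu nu : V → ℝ) : ℝ :=
  (∑ e ∈ G.edgeFinset, lam e * |cutMass G hG z0 mu e - cutMass G hG z0 nu e| ^ p) ^ (1/p)

/-- Tree path metric induced by edge lengths. -/
def treeDist (G : SimpleGraph V) (hG : G.IsTree) (lam : Sym2 V → ℝ) (x y : V) : ℝ :=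
  ((treePath G hG x y).edges.map lam).sum

/-- 1-Wasserstein distance via Kantorovich–Rubinstein duality. -/
def W1 [Fintype V] (d : V → V → ℝ) (mu nu : V → ℝ) : ℝ :=
  sSup {s | ∃ f : V → ℝ, (∀ a b, |f a - f b| ≤ d a b) ∧ s = ∑ v, f v * (mu v - nu v)}


lemma treePath_isPath (G : SimpleGraph V) (hG : G.IsTree) (x y : V) :
    (treePath G hG x y).IsPath :=
  (hG.existsUnique_path x y).exists.choose_spec

lemma treePath_unique (G : SimpleGraph V) (hG : G.IsTree) {x y : V}
    {p : G.Walk x y} (hp : p.IsPath) : p = treePath G hG x y :=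
  ((hG.existsUnique_path x y).unique hp (treePath_isPath G hG x y))

/-- Reachability after deleting an edge, in terms of walks avoiding that edge. -/
lemma reachable_sdiff_iff (G : SimpleGraph V) (e : Sym2 V) (u v : V) :
    (G \ SimpleGraph.fromEdgeSet {e}).Reachable u v ↔ ∃ p : G.Walk u v, e ∉ p.edges := by
  constructor
  · rintro ⟨p⟩
    refine ⟨p.map (SimpleGraph.Hom.ofLE (by simp)), ?_⟩
    simp_rw [SimpleGraph.Walk.edges_map, List.mem_map,
      SimpleGraph.Hom.ofLE_apply, Sym2.map_id', id]
    rintro ⟨e', h, rfl⟩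
    have := p.edges_subset_edgeSet h
    rw [SimpleGraph.edgeSet_sdiff, SimpleGraph.edgeSet_fromEdgeSet] at this
    have hne : ¬ e'.IsDiag := SimpleGraph.not_isDiag_of_mem_edgeSet _ this.1
    exact this.2 ⟨rfl, hne⟩
  · rintro ⟨p, h⟩
    refine ⟨p.transfer _ fun e' he' => ?_⟩
    rw [SimpleGraph.edgeSet_sdiff, SimpleGraph.edgeSet_fromEdgeSet]
    refine ⟨p.edges_subset_edgeSet he', ?_⟩
    rintro ⟨rfl, -⟩
    exact h he'

/-- An edge lies on the unique path between `u` and `v` iff every walk from `u`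
to `v` uses it. -/
lemma mem_treePath_iff_forall (G : SimpleGraph V) (hG : G.IsTree) (e : Sym2 V) (u v : V) :
    e ∈ (treePath G hG u v).edges ↔ ∀ p : G.Walk u v, e ∈ p.edges := by
  constructor
  · intro he p
    by_contra hnot
    have hb : p.bypass = treePath G hG u v := treePath_unique G hG p.bypass_isPath
    have : e ∈ p.bypass.edges := hb ▸ he
    exact hnot (p.edges_bypass_subset this)
  · intro h
    exact h _

lemma mem_treePath_iff_not_reachable (G : SimpleGraph V) (hG : G.IsTree)
    (e : Sym2 V) (u v : V) :
    e ∈ (treePath G hG u v).edges ↔ ¬(G \ SimpleGraph.fromEdgeSet {e}).Reachable u v := by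
  rw [reachable_sdiff_iff, mem_treePath_iff_forall G hG, not_exists]
  simp only [not_not]

/-- In a connected graph minus one edge `s(a,b)`, every vertex is still reachable
from `a` or from `b`. -/
lemma reach_endpoint (G : SimpleGraph V) {a b : V} (hab : G.Adj a b) :
    ∀ {u w : V} (_ : G.Walk u w),
      (G \ SimpleGraph.fromEdgeSet {s(a, b)}).Reachable u w ∨
      (G \ SimpleGraph.fromEdgeSet {s(a, b)}).Reachable u a ∨
      (G \ SimpleGraph.fromEdgeSet {s(a, b)}).Reachable u b := by
  intro u w W
  induction W with
  | nil => exact Or.inl (SimpleGraph.Reachable.refl _)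
  | @cons u c w h W ih =>
    by_cases hcase : s(u, c) = s(a, b)
    · rw [Sym2.eq_iff] at hcase
      rcases hcase with ⟨rfl, rfl⟩ | ⟨rfl, rfl⟩
      · exact Or.inr (Or.inl (SimpleGraph.Reachable.refl _))
      · exact Or.inr (Or.inr (SimpleGraph.Reachable.refl _))
    · have hadj : (G \ SimpleGraph.fromEdgeSet {s(a, b)}).Adj u c := by
        rw [SimpleGraph.sdiff_adj]
        refine ⟨h, ?_⟩
        rw [SimpleGraph.fromEdgeSet_adj]
        rintro ⟨hmem, -⟩
        exact hcase hmem
      rcases ih with h1 | h1 | h1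
      · exact Or.inl (hadj.reachable.trans h1)
      · exact Or.inr (Or.inl (hadj.reachable.trans h1))
      · exact Or.inr (Or.inr (hadj.reachable.trans h1))

/-- Key combinatorial fact: an edge of the tree lies on the path from `x` to `y`
iff it lies on exactly one of the paths from `z0` to `x` and from `z0` to `y`. -/
lemma mem_treePath_xor (G : SimpleGraph V) (hG : G.IsTree) (z0 : V) {e : Sym2 V}
    (he : e ∈ G.edgeSet) (x y : V) :
    (e ∈ (treePath G hG x y).edges ↔
      ¬(e ∈ (treePath G hG z0 x).edges ↔ e ∈ (treePath G hG z0 y).edges)) := by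
  induction e with
  | _ a b =>
  have hab : G.Adj a b := he
  set G' := G \ SimpleGraph.fromEdgeSet {s(a, b)} with hG'
  have hnab : ¬ G'.Reachable a b := by
    have hbridge : G.IsBridge s(a, b) :=
      (SimpleGraph.isAcyclic_iff_forall_adj_isBridge.1 hG.2) hab
    exact SimpleGraph.isBridge_iff.1 hbridge
  have hcover : ∀ u : V, G'.Reachable u a ∨ G'.Reachable u b := by
    intro u
    obtain ⟨W⟩ := hG.isConnected (u := u) (v := a)
    rcases reach_endpoint G hab W with h1 | h1 | h1
    · exact Or.inl h1
    · exact Or.inl h1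
    · exact Or.inr h1
  have hreach : ∀ u v : V, G'.Reachable u v ↔ (G'.Reachable a u ↔ G'.Reachable a v) := by
    intro u v
    constructor
    · intro h
      exact ⟨fun pa => pa.trans h, fun pv => pv.trans h.symm⟩
    · intro h
      by_cases pu : G'.Reachable a u
      · exact pu.symm.trans (h.1 pu)
      · have pv : ¬ G'.Reachable a v := fun pv => pu (h.2 pv)
        rcases hcover u with h1 | h1
        · exact absurd h1.symm pu
        · rcases hcover v with h2 | h2
          · exact absurd h2.symm pv
          · exact h1.trans h2.symm
  rw [mem_treePath_iff_not_reachable G hG, mem_treePath_iff_not_reachable G hG,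
    mem_treePath_iff_not_reachable G hG, ← hG', hreach x y, hreach z0 x, hreach z0 y]
  tauto

lemma cutMass_dirac [Fintype V] [DecidableEq V] (G : SimpleGraph V) (hG : G.IsTree)
    (z0 x : V) (e : Sym2 V) :
    cutMass G hG z0 (dirac x) e = if e ∈ (treePath G hG z0 x).edges then 1 else 0 := by
  classical
  unfold cutMass dirac
  rw [Finset.sum_eq_single_of_mem x (Finset.mem_univ x)
    (fun v _ hv => by simp [hv])]
  simp

/-- On a tree with positive edge lengths, the Sobolev transport distance between Dirac
measures is the `1/p`-th power of the total length of the path between the base points. -/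
theorem Sp_dirac_eq_path_length_rpow [Fintype V] [DecidableEq V]
    (G : SimpleGraph V) (hG : G.IsTree) (z0 : V) (lam : Sym2 V → ℝ)
    (hlam : ∀ e ∈ G.edgeSet, 0 < lam e) (p : ℝ) (hp : 1 ≤ p) (x y : V) :
    Sp G hG z0 lam p (dirac x) (dirac y)
      = (((treePath G hG x y).edges.map lam).sum) ^ (1/p) := by
  classical
  have hp0 : p ≠ 0 := by linarith
  unfold Sp
  congr 1
  have hsum : ∀ e ∈ G.edgeFinset,
      lam e * |cutMass G hG z0 (dirac x) e - cutMass G hG z0 (dirac y) e| ^ p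
        = if e ∈ (treePath G hG x y).edges then lam e else 0 := by
    intro e heF
    have he : e ∈ G.edgeSet := SimpleGraph.mem_edgeFinset.1 heF
    rw [cutMass_dirac, cutMass_dirac]
    have hx := mem_treePath_xor G hG z0 he x y
    by_cases hxy : e ∈ (treePath G hG x y).edges
    · have hne : ¬(e ∈ (treePath G hG z0 x).edges ↔ e ∈ (treePath G hG z0 y).edges) :=
        hx.1 hxy
      rw [if_pos hxy]
      by_cases h1 : e ∈ (treePath G hG z0 x).edges
      · have h2 : e ∉ (treePath G hG z0 y).edges := fun h2 => hne ⟨fun _ => h2, fun _ => h1⟩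
        rw [if_pos h1, if_neg h2]
        norm_num [Real.one_rpow]
      · have h2 : e ∈ (treePath G hG z0 y).edges := by
          by_contra h2
          exact hne ⟨fun h => absurd h h1, fun h => absurd h h2⟩
        rw [if_neg h1, if_pos h2]
        norm_num [Real.one_rpow]
    · have heq : (e ∈ (treePath G hG z0 x).edges ↔ e ∈ (treePath G hG z0 y).edges) := by
        by_contra h
        exact hxy (hx.2 h)
      rw [if_neg hxy]
      by_cases h1 : e ∈ (treePath G hG z0 x).edges
      · rw [if_pos h1, if_pos (heq.1 h1)]
        simp [Real.zero_rpow hp0]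
      · rw [if_neg h1, if_neg (fun h => h1 (heq.2 h))]
        simp [Real.zero_rpow hp0]
  rw [Finset.sum_congr rfl hsum]
  simp only [← List.mem_toFinset]
  rw [Finset.sum_ite_mem]
  have hfil : G.edgeFinset ∩ (treePath G hG x y).edges.toFinset
      = (treePath G hG x y).edges.toFinset := by
    apply Finset.inter_eq_right.2
    intro e heE
    rw [List.mem_toFinset] at heE
    exact SimpleGraph.mem_edgeFinset.2 ((treePath G hG x y).edges_subset_edgeSet heE)
  rw [hfil, List.sum_toFinset lam (treePath_isPath G hG x y).isTrail.edges_nodup]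

end
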